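/- (Theorem 3.5, finite time stabilization by impulse controls) Assume: (a) there exist C3 > 0 and σ ∈ (0,1) such that for all ε > 0, all t > 0 and all u0 ∈ L²(Ω), ‖S(t)u0‖² ≤ e^{C3(1 + (1/t)^{σ/(1−σ)})} e^{((C3/t) ln(e + 1/ε))^σ} ‖S(t)u0‖_ω² + ε ‖u0‖²; and (b) there exist c > 0 and ρ > 0 such that Card{ j ≥ 1 : λ_j ≤ Λ } ≤ c Λ^{1/ρ} for every Λ > 0. Then for every T > 0 there exist a strictly increasing sequence (t_m)_{m≥0} with t_0 = 0 and t_m → T, bounded linear operators F_m : L²(Ω) → L²(Ω), and constants C, K > 0, such that for every z0 ∈ L²(Ω) the impulse-feedback trajectory z : [0,T) → L²(Ω), defined by z(0) = z0 and, writing s_m := (t_m + t_{m+1})/2, by z(t) = S(t − t_m) z(t_m) for t ∈ [t_m, s_m) and z(t) = S(t − s_m)( S(s_m − t_m) z(t_m) + 1_ω F_m(z(t_m)) ) for t ∈ [s_m, t_{m+1}), satisfies ‖z(t)‖ ≤ C e^{ −(1/K) (T/(T−t))^{σ/(1−σ)} } ‖z0‖ for all t ∈ [0,T). In particular ‖z(t)‖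 → 0 as t → T⁻, and ‖F_m(z(t_m))‖ → 0 as m → ∞. -/

import Mathlib

/-!
On `[t_m, t_{m+1})`, `t_m = T - T / 2^m`, the control acts once, at the midpoint, through the
feedback of the penalised HUM problem for the free evolution over `τ_m = T / 2^(m+2)`: by
Lax–Milgram, observability (a) with precision `ε_m` yields `F_m` with `‖F_m‖² ≤ M(τ_m, ε_m)` and
`‖S(τ_m)(S(τ_m) x + 1_ω F_m x)‖² ≤ ε_m ‖x‖²`. With `γ = σ/(1-σ)` and
`ε_m = exp(-2a(2^γ - 1) 2^(mγ))`, the product of the `√ε_k` decays like `exp(-a 2^(mγ))`, whereas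
`log M(τ_m, ε_m)` only grows like `(1 + a^σ) 2^(mγ)`, because
`(log(1/ε_m) / τ_m)^σ ≈ (a 2^(m(1+γ)))^σ = a^σ 2^(mγ)`. For large `a` the decay wins, and
`T / (T - t) ≤ 2^(m+1)` on `[t_m, t_{m+1})` turns this into the bound with `K = 1`.
-/

open MeasureTheory Set Filter Topology
open scoped RealInnerProductSpace ENNReal

noncomputable section

noncomputable def heatSG {d : ℕ} {Ω : Set (EuclideanSpace ℝ (Fin d))}
    (B : HilbertBasis ℕ ℝ (Lp ℝ 2 (volume.restrict Ω))) (lam : ℕ → ℝ)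
    (t : ℝ) (u : Lp ℝ 2 (volume.restrict Ω)) : Lp ℝ 2 (volume.restrict Ω) :=
  ∑' j, (Real.exp (-(lam j) * t) * ⟪u, B j⟫) • B j

noncomputable def indLp {d : ℕ} {Ω : Set (EuclideanSpace ℝ (Fin d))}
    (ω : Set (EuclideanSpace ℝ (Fin d))) (hω : MeasurableSet ω)
    (f : Lp ℝ 2 (volume.restrict Ω)) : Lp ℝ 2 (volume.restrict Ω) :=
  MemLp.toLp (ω.indicator ⇑f) ((Lp.memLp f).indicator hω)

section Feedback

variable {H U K : Type*}
  [NormedAddCommGroup H] [InnerProductSpace ℝ H] [CompleteSpace H]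
  [NormedAddCommGroup U] [InnerProductSpace ℝ U] [CompleteSpace U]
  [NormedAddCommGroup K] [InnerProductSpace ℝ K] [CompleteSpace K]

open ContinuousLinearMap

theorem exists_rightInverse_smul_add_adjoint_comp (G : U →L[ℝ] K) {M ε : ℝ} (hM : 0 ≤ M)
    (hε : 0 < ε) : ∃ R : U →L[ℝ] U, ∀ v, ε • R v + M • adjoint G (G (R v)) = v := by
  set P : U →L[ℝ] U := ε • ContinuousLinearMap.id ℝ U + M • (adjoint G ∘L G)
  have hcoercive : IsCoercive ((innerSL ℝ).comp P) := ⟨ε, hε, fun f => by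
    have : ⟪P f, f⟫ = ε * ‖f‖ ^ 2 + M * ‖G f‖ ^ 2 := by
      simp [P, inner_add_left, real_inner_smul_left, adjoint_inner_left]
    simp only [coe_comp, Function.comp_apply, innerSL_apply_apply, this]
    nlinarith [mul_nonneg hM (sq_nonneg ‖G f‖)]⟩
  refine ⟨hcoercive.continuousLinearEquivOfBilin.symm, fun v => ext_inner_right ℝ fun w => ?_⟩
  have := hcoercive.continuousLinearEquivOfBilin_apply
    (hcoercive.continuousLinearEquivOfBilin.symm v) w
  rw [ContinuousLinearEquiv.apply_symm_apply] at this
  exact this.symm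

theorem penalized_cost_le (L : H →L[ℝ] K) (G : U →L[ℝ] K) {M ε : ℝ} (hM : 0 < M) (hε : 0 < ε)
    (hobs : ∀ u, ‖adjoint L u‖ ^ 2 ≤ M * ‖adjoint G u‖ ^ 2 + ε * ‖u‖ ^ 2) {z : H} {f : U}
    (hopt : ε • f = -M • adjoint G (L z + G f)) :
    ε * ‖f‖ ^ 2 + M * ‖L z + G f‖ ^ 2 ≤ ε * M * ‖z‖ ^ 2 := by
  set r := L z + G f
  set W := ε * ‖f‖ ^ 2 + M * ‖r‖ ^ 2
  -- `hopt` turns the cost `W` into `M ⟪L† r, z⟫`, and observability at `r` bounds `‖L† r‖²`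
  -- by `ε / M * W`
  have hW : W = M * ⟪adjoint L r, z⟫ := by
    have h1 : ε * ‖f‖ ^ 2 = -M * ⟪r, G f⟫ := by
      rw [← real_inner_self_eq_norm_sq, ← real_inner_smul_left, hopt, real_inner_smul_left,
        adjoint_inner_left]
    have h2 : ‖r‖ ^ 2 = ⟪r, L z⟫ + ⟪r, G f⟫ := by
      rw [← real_inner_self_eq_norm_sq, ← inner_add_right]
    rw [adjoint_inner_left, show W = ε * ‖f‖ ^ 2 + M * ‖r‖ ^ 2 from rfl, h1, h2]; ring
  have hGr : adjoint G r = -(ε / M) • f := by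
    calc adjoint G r = M⁻¹ • (M • adjoint G r) := (inv_smul_smul₀ hM.ne' _).symm
      _ = -(ε / M) • f := by rw [show M • adjoint G r = -(ε • f) by rw [hopt]; module]; module
  have hLr : ‖adjoint L r‖ ^ 2 ≤ ε / M * W := by
    calc ‖adjoint L r‖ ^ 2 ≤ M * ‖adjoint G r‖ ^ 2 + ε * ‖r‖ ^ 2 := hobs r
      _ = ε / M * W := by
        rw [hGr, norm_smul, Real.norm_eq_abs, abs_neg, abs_of_pos (div_pos hε hM)]
        field_simp; ring
  have hW0 : 0 ≤ W := by positivity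
  have hW2 : W ^ 2 ≤ (ε * M * ‖z‖ ^ 2) * W := by
    calc W ^ 2 ≤ (M * (‖adjoint L r‖ * ‖z‖)) ^ 2 := by
          refine pow_le_pow_left₀ hW0 ?_ 2
          rw [hW]; exact mul_le_mul_of_nonneg_left (real_inner_le_norm _ _) hM.le
      _ = M ^ 2 * ‖adjoint L r‖ ^ 2 * ‖z‖ ^ 2 := by ring
      _ ≤ M ^ 2 * (ε / M * W) * ‖z‖ ^ 2 := by gcongr
      _ = (ε * M * ‖z‖ ^ 2) * W := by field_simp
  by_contra! h
  nlinarith [mul_lt_mul_of_pos_right h (lt_of_le_of_lt (by positivity) h)]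

/-- `F z` minimises the penalised cost `ε ‖f‖² + M ‖L z + G f‖²`. -/
theorem exists_feedback_of_observability (L : H →L[ℝ] K) (G : U →L[ℝ] K) {M ε : ℝ}
    (hM : 0 < M) (hε : 0 < ε)
    (hobs : ∀ u, ‖adjoint L u‖ ^ 2 ≤ M * ‖adjoint G u‖ ^ 2 + ε * ‖u‖ ^ 2) :
    ∃ F : H →L[ℝ] U, ∀ z, ‖F z‖ ^ 2 ≤ M * ‖z‖ ^ 2 ∧ ‖L z + G (F z)‖ ^ 2 ≤ ε * ‖z‖ ^ 2 := by
  obtain ⟨R, hR⟩ := exists_rightInverse_smul_add_adjoint_comp G hM.le hε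
  refine ⟨-M • (R ∘L adjoint G ∘L L), fun z => ?_⟩
  have hopt : ε • (-M • (R ∘L adjoint G ∘L L)) z =
      -M • adjoint G (L z + G ((-M • (R ∘L adjoint G ∘L L)) z)) := by
    simp only [smul_apply, comp_apply, map_smul, map_add, smul_add]
    have := hR (adjoint G (L z))
    set y := R (adjoint G (L z))
    rw [← this]; module
  have hcost := penalized_cost_le L G hM hε hobs hopt
  constructor
  · nlinarith [sq_nonneg ‖L z + G ((-M • (R ∘L adjoint G ∘L L)) z)‖]
  · nlinarith [sq_nonneg ‖(-M • (R ∘L adjoint G ∘L L)) z‖]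


theorem le_sqrt_mul_of_sq_le {a b c : ℝ} (hb : 0 ≤ b) (h : a ^ 2 ≤ c * b ^ 2) : a ≤ √c * b := by
  calc a ≤ √(c * b ^ 2) := (le_abs_self a).trans (Real.abs_le_sqrt h)
    _ = √c * b := by rw [Real.sqrt_mul' c (sq_nonneg b), Real.sqrt_sq hb]

theorem exists_feedback_of_isSelfAdjoint {S Q : H →L[ℝ] H} (hS : IsSelfAdjoint S)
    (hQ : IsSelfAdjoint Q) (hS1 : ‖S‖ ≤ 1) {M ε : ℝ} (hM : 0 < M) (hε : 0 < ε)
    (hobs : ∀ u, ‖S u‖ ^ 2 ≤ M * ‖Q (S u)‖ ^ 2 + ε * ‖u‖ ^ 2) :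
    ∃ F : H →L[ℝ] H, ∀ x, ‖F x‖ ≤ √M * ‖x‖ ∧ ‖S (S x + Q (F x))‖ ≤ √ε * ‖x‖ := by
  obtain ⟨F, hF⟩ := exists_feedback_of_observability (S ∘L S) (S ∘L Q) hM hε fun u => by
    rw [adjoint_comp, adjoint_comp, hS.adjoint_eq, hQ.adjoint_eq]
    calc ‖S (S u)‖ ^ 2 ≤ ‖S u‖ ^ 2 := by
          gcongr; simpa using S.le_of_opNorm_le hS1 (S u)
      _ ≤ M * ‖Q (S u)‖ ^ 2 + ε * ‖u‖ ^ 2 := hobs u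
  refine ⟨F, fun x => ⟨le_sqrt_mul_of_sq_le (norm_nonneg x) (hF x).1, ?_⟩⟩
  rw [map_add]
  exact le_sqrt_mul_of_sq_le (norm_nonneg x) (hF x).2

end Feedback

namespace HilbertBasis

variable {ι E : Type*} [NormedAddCommGroup E] [InnerProductSpace ℝ E] (b : HilbertBasis ι ℝ E)
  {a : ι → ℝ}

theorem memℓp_mul_repr (ha : ∀ i, |a i| ≤ 1) (x : E) : Memℓp (fun i => a i * b.repr x i) 2 :=
  (lp.memℓp (b.repr x)).mono' fun i => by
    simpa [abs_mul] using mul_le_of_le_one_left (abs_nonneg _) (ha i)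

variable (ha : ∀ i, |a i| ≤ 1)

def diagonal : E →L[ℝ] E :=
  LinearMap.mkContinuous
    { toFun := fun x => b.repr.symm ⟨_, b.memℓp_mul_repr ha x⟩
      map_add' := fun x y => by
        rw [← map_add]; congr 1; ext i; simp [mul_add]; rfl
      map_smul' := fun c x => by
        rw [← map_smul]; congr 1; ext i; simp; ring }
    1 fun x => by
      simp only [LinearMap.coe_mk, AddHom.coe_mk, LinearIsometryEquiv.norm_map, one_mul]
      rw [← b.repr.norm_map x]
      exact lp.norm_mono two_ne_zero fun i => by
        simpa [abs_mul] using mul_le_of_le_one_left (abs_nonneg _) (ha i)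

theorem inner_diagonal (x : E) (i : ι) : ⟪b i, b.diagonal ha x⟫ = a i * ⟪b i, x⟫ := by
  rw [← b.repr_apply_apply, ← b.repr_apply_apply]
  simp [diagonal]

theorem hasSum_diagonal (x : E) :
    HasSum (fun i => (a i * ⟪b i, x⟫) • b i) (b.diagonal ha x) := by
  simpa [b.repr_apply_apply, inner_diagonal] using b.hasSum_repr (b.diagonal ha x)

theorem norm_diagonal_le : ‖b.diagonal ha‖ ≤ 1 :=
  LinearMap.mkContinuous_norm_le _ zero_le_one _

theorem isSelfAdjoint_diagonal [CompleteSpace E] : IsSelfAdjoint (b.diagonal ha) :=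
  LinearMap.IsSymmetric.isSelfAdjoint fun x y => by
    simp only [ContinuousLinearMap.coe_coe]
    rw [← b.tsum_inner_mul_inner, ← b.tsum_inner_mul_inner x]
    congr 1; ext i
    rw [real_inner_comm (b i) (b.diagonal ha x), inner_diagonal, inner_diagonal,
      real_inner_comm (b i) x]
    ring

end HilbertBasis

namespace MeasureTheory.Lp

variable {α E : Type*} {m : MeasurableSpace α} {μ : Measure α} {p : ℝ≥0∞}
  {s : Set α} (hs : MeasurableSet s)

section NormedSpace

variable [NormedAddCommGroup E]

theorem norm_toLp_indicator_le (f : Lp E p μ) : ‖((Lp.memLp f).indicator hs).toLp _‖ ≤ ‖f‖ := by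
  rw [Lp.norm_toLp, Lp.norm_def]
  exact ENNReal.toReal_mono (Lp.eLpNorm_ne_top f) (eLpNorm_indicator_le _)

variable [NormedSpace ℝ E] [Fact (1 ≤ p)]

def indicatorCLM : Lp E p μ →L[ℝ] Lp E p μ :=
  LinearMap.mkContinuous
    { toFun := fun f => ((Lp.memLp f).indicator hs).toLp _
      map_add' := fun f g => by
        rw [← MemLp.toLp_add]
        refine MemLp.toLp_congr _ _ ?_
        refine ((Lp.coeFn_add f g).indicator (s := s)).trans (Eventually.of_forall fun x => ?_)
        by_cases hx : x ∈ s <;> simp [hx]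
      map_smul' := fun c f => by
        rw [← MemLp.toLp_const_smul]
        refine MemLp.toLp_congr _ _ ?_
        refine ((Lp.coeFn_smul c f).indicator (s := s)).trans (Eventually.of_forall fun x => ?_)
        by_cases hx : x ∈ s <;> simp [hx] }
    1 fun f => (one_mul ‖f‖).symm ▸ norm_toLp_indicator_le hs f

theorem indicatorCLM_apply (f : Lp E p μ) :
    indicatorCLM hs f = ((Lp.memLp f).indicator hs).toLp _ := rfl

end NormedSpace

theorem isSelfAdjoint_indicatorCLM [NormedAddCommGroup E] [InnerProductSpace ℝ E]
    [CompleteSpace E] : IsSelfAdjoint (indicatorCLM hs : Lp E 2 μ →L[ℝ] Lp E 2 μ) :=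
  LinearMap.IsSymmetric.isSelfAdjoint fun f g => by
    simp only [ContinuousLinearMap.coe_coe, indicatorCLM_apply, L2.inner_def]
    refine integral_congr_ae ?_
    filter_upwards [((Lp.memLp f).indicator hs).coeFn_toLp,
      ((Lp.memLp g).indicator hs).coeFn_toLp] with x hfx hgx
    rw [hfx, hgx]
    by_cases hx : x ∈ s <;> simp [hx]

end MeasureTheory.Lp

theorem abs_exp_neg_mul_le_one {l t : ℝ} (hl : 0 ≤ l) (ht : 0 ≤ t) :
    |Real.exp (-l * t)| ≤ 1 := by
  rw [abs_of_pos (Real.exp_pos _), Real.exp_le_one_iff, neg_mul, neg_nonpos]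
  exact mul_nonneg hl ht

section Heat

variable {d : ℕ} {Ω : Set (EuclideanSpace ℝ (Fin d))}
  (B : HilbertBasis ℕ ℝ (Lp ℝ 2 (volume.restrict Ω))) {lam : ℕ → ℝ} {t : ℝ}

def heatCLM (hlam : ∀ j, 0 ≤ lam j) (ht : 0 ≤ t) :
    Lp ℝ 2 (volume.restrict Ω) →L[ℝ] Lp ℝ 2 (volume.restrict Ω) :=
  B.diagonal fun j => abs_exp_neg_mul_le_one (hlam j) ht

theorem coe_heatCLM (hlam : ∀ j, 0 ≤ lam j) (ht : 0 ≤ t) :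
    ⇑(heatCLM B hlam ht) = heatSG B lam t := by
  ext1 u
  rw [heatSG, heatCLM, ← (B.hasSum_diagonal _ u).tsum_eq]
  simp_rw [real_inner_comm u]

theorem norm_heatSG_le (hlam : ∀ j, 0 ≤ lam j) (ht : 0 ≤ t) (u : Lp ℝ 2 (volume.restrict Ω)) :
    ‖heatSG B lam t u‖ ≤ ‖u‖ := by
  rw [← coe_heatCLM B hlam ht]
  simpa using (heatCLM B hlam ht).le_of_opNorm_le (B.norm_diagonal_le _) u

theorem exists_heat_feedback (hlam : ∀ j, 0 ≤ lam j) {ω : Set (EuclideanSpace ℝ (Fin d))}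
    (hω : MeasurableSet ω) {M ε : ℝ} (ht : 0 ≤ t) (hM : 0 < M) (hε : 0 < ε)
    (hobs : ∀ u, ‖heatSG B lam t u‖ ^ 2 ≤
      M * ‖indLp ω hω (heatSG B lam t u)‖ ^ 2 + ε * ‖u‖ ^ 2) :
    ∃ F : Lp ℝ 2 (volume.restrict Ω) →L[ℝ] Lp ℝ 2 (volume.restrict Ω), ∀ x,
      ‖F x‖ ≤ √M * ‖x‖ ∧ ‖heatSG B lam t (heatSG B lam t x + indLp ω hω (F x))‖ ≤ √ε * ‖x‖ := by
  have hS := coe_heatCLM B hlam ht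
  have hQ : ⇑(Lp.indicatorCLM hω : Lp ℝ 2 (volume.restrict Ω) →L[ℝ] _) = indLp ω hω := rfl
  obtain ⟨F, hF⟩ := exists_feedback_of_isSelfAdjoint (B.isSelfAdjoint_diagonal _)
    (Lp.isSelfAdjoint_indicatorCLM hω) (B.norm_diagonal_le _) hM hε
    (S := heatCLM B hlam ht) (by simpa only [hS, hQ] using hobs)
  exact ⟨F, by simpa only [hS, hQ] using hF⟩

end Heat

def halvingTime (T : ℝ) (m : ℕ) : ℝ := T - T / 2 ^ m

section HalvingTime

variable {T : ℝ}

@[simp] theorem halvingTime_zero (T : ℝ) : halvingTime T 0 = 0 := by simp [halvingTime]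

theorem halvingTime_lt (hT : 0 < T) (m : ℕ) : halvingTime T m < T := by
  have : 0 < T / 2 ^ m := by positivity
  unfold halvingTime; linarith

theorem strictMono_halvingTime (hT : 0 < T) : StrictMono (halvingTime T) := fun a b hab => by
  have : T / 2 ^ b < T / 2 ^ a :=
    div_lt_div_of_pos_left hT (by positivity) (pow_lt_pow_right₀ one_lt_two hab)
  unfold halvingTime; linarith

theorem tendsto_halvingTime (T : ℝ) : Tendsto (halvingTime T) atTop (𝓝 T) := by
  have := tendsto_const_nhds (x := T).div_atTop (tendsto_pow_atTop_atTop_of_one_lt one_lt_two)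
  unfold halvingTime
  simpa using (tendsto_const_nhds (x := T)).sub this

theorem halvingTime_midpoint_sub (T : ℝ) (m : ℕ) :
    (halvingTime T m + halvingTime T (m + 1)) / 2 - halvingTime T m = T / 2 ^ (m + 2) := by
  unfold halvingTime; rw [pow_succ, pow_succ, pow_succ]; field_simp; ring

theorem halvingTime_succ_sub_midpoint (T : ℝ) (m : ℕ) :
    halvingTime T (m + 1) - (halvingTime T m + halvingTime T (m + 1)) / 2 = T / 2 ^ (m + 2) := by
  unfold halvingTime; rw [pow_succ, pow_succ, pow_succ]; field_simp; ring

theorem exists_mem_Ico_halvingTime {t : ℝ} (ht : t ∈ Ico 0 T) :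
    ∃ m, t ∈ Ico (halvingTime T m) (halvingTime T (m + 1)) := by
  have hTt : 0 < T - t := sub_pos.2 ht.2
  obtain ⟨m, hm, hm'⟩ :=
    exists_nat_pow_near ((one_le_div hTt).2 (by linarith [ht.1] : T - t ≤ T)) one_lt_two
  refine ⟨m, ?_, ?_⟩ <;> unfold halvingTime
  · have := (le_div_iff₀ hTt).1 hm
    have : T - t ≤ T / 2 ^ m := (le_div_iff₀' (by positivity)).2 this
    linarith
  · have := (div_lt_iff₀ hTt).1 hm'
    have : T / 2 ^ (m + 1) < T - t := (div_lt_iff₀' (by positivity)).2 this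
    linarith

theorem div_sub_le_of_lt_halvingTime (hT : 0 < T) {t : ℝ} {m : ℕ}
    (ht : t < halvingTime T (m + 1)) : T / (T - t) ≤ 2 ^ (m + 1) := by
  have h : T / 2 ^ (m + 1) < T - t := by unfold halvingTime at ht; linarith
  rw [div_le_iff₀ (lt_trans (by positivity) h)]
  rw [div_lt_iff₀ (by positivity)] at h
  linarith

end HalvingTime

section ImpulseTrajectory

variable {E : Type*} [SeminormedAddCommGroup E] {S : ℝ → E → E} {Q : E → E}

theorem norm_le_prod_mul_norm_zero {x : ℕ → E} {r : ℕ → ℝ} (hr : ∀ m, 0 ≤ r m)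
    (h : ∀ m, ‖x (m + 1)‖ ≤ r m * ‖x m‖) (m : ℕ) :
    ‖x m‖ ≤ (∏ k ∈ Finset.range m, r k) * ‖x 0‖ := by
  induction m with
  | zero => simp
  | succ m ih =>
    calc ‖x (m + 1)‖ ≤ r m * ‖x m‖ := h m
      _ ≤ r m * ((∏ k ∈ Finset.range m, r k) * ‖x 0‖) := mul_le_mul_of_nonneg_left ih (hr m)
      _ = (∏ k ∈ Finset.range (m + 1), r k) * ‖x 0‖ := by rw [Finset.prod_range_succ]; ring

theorem norm_le_of_mem_Ico_of_impulse {t_ : ℕ → ℝ} {z : ℝ → E} {G : E → E} {m : ℕ}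
    (hS : ∀ t, 0 ≤ t → ∀ u, ‖S t u‖ ≤ ‖u‖) (hQ : ∀ u, ‖Q u‖ ≤ ‖u‖)
    (hfree : ∀ t ∈ Ico (t_ m) ((t_ m + t_ (m + 1)) / 2), z t = S (t - t_ m) (z (t_ m)))
    (himp : ∀ t ∈ Ico ((t_ m + t_ (m + 1)) / 2) (t_ (m + 1)),
      z t = S (t - (t_ m + t_ (m + 1)) / 2)
        (S ((t_ m + t_ (m + 1)) / 2 - t_ m) (z (t_ m)) + Q (G (z (t_ m)))))
    {t : ℝ} (ht : t ∈ Ico (t_ m) (t_ (m + 1))) :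
    ‖z t‖ ≤ ‖z (t_ m)‖ + ‖G (z (t_ m))‖ := by
  obtain ⟨ht₁, ht₂⟩ := ht
  rcases lt_or_ge t ((t_ m + t_ (m + 1)) / 2) with hmid | hmid
  · rw [hfree t ⟨ht₁, hmid⟩]
    linarith [hS (t - t_ m) (by linarith) (z (t_ m)), norm_nonneg (G (z (t_ m)))]
  · rw [himp t ⟨hmid, ht₂⟩]
    calc _ ≤ ‖S ((t_ m + t_ (m + 1)) / 2 - t_ m) (z (t_ m)) + Q (G (z (t_ m)))‖ :=
          hS _ (by linarith) _
      _ ≤ _ := norm_add_le_of_le (hS _ (by linarith) _) (hQ _)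

theorem norm_impulse_trajectory_le {F : ℕ → E → E} {z : ℝ → E} {T γ C : ℝ} {κ δ : ℕ → ℝ}
    (hT : 0 < T) (hγ : 0 ≤ γ)
    (hS : ∀ t, 0 ≤ t → ∀ u, ‖S t u‖ ≤ ‖u‖) (hQ : ∀ u, ‖Q u‖ ≤ ‖u‖)
    (hκ : ∀ m, 0 ≤ κ m) (hδ : ∀ m, 0 ≤ δ m) (hF : ∀ m x, ‖F m x‖ ≤ κ m * ‖x‖)
    (hstep : ∀ m x, ‖S (T / 2 ^ (m + 2)) (S (T / 2 ^ (m + 2)) x + Q (F m x))‖ ≤ δ m * ‖x‖)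
    (hbudget : ∀ m, (1 + κ m) * ∏ k ∈ Finset.range m, δ k ≤
      C * Real.exp (-((2 : ℝ) ^ (m + 1)) ^ γ))
    (hfree : ∀ m : ℕ, ∀ t ∈ Ico (halvingTime T m) ((halvingTime T m + halvingTime T (m + 1)) / 2),
      z t = S (t - halvingTime T m) (z (halvingTime T m)))
    (himp : ∀ m : ℕ,
      ∀ t ∈ Ico ((halvingTime T m + halvingTime T (m + 1)) / 2) (halvingTime T (m + 1)),
      z t = S (t - (halvingTime T m + halvingTime T (m + 1)) / 2)
        (S ((halvingTime T m + halvingTime T (m + 1)) / 2 - halvingTime T m)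
          (z (halvingTime T m)) + Q (F m (z (halvingTime T m)))))
    (hjump : ∀ m : ℕ,
      z (halvingTime T (m + 1)) =
        S (halvingTime T (m + 1) - (halvingTime T m + halvingTime T (m + 1)) / 2)
          (S ((halvingTime T m + halvingTime T (m + 1)) / 2 - halvingTime T m)
            (z (halvingTime T m)) + Q (F m (z (halvingTime T m))))) :
    (∀ t ∈ Ico 0 T, ‖z t‖ ≤ C * Real.exp (-(T / (T - t)) ^ γ) * ‖z 0‖) ∧
      ∀ m, ‖F m (z (halvingTime T m))‖ ≤ C * Real.exp (-((2 : ℝ) ^ (m + 1)) ^ γ) * ‖z 0‖ := by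
  have hnode : ∀ m, ‖z (halvingTime T m)‖ ≤ (∏ k ∈ Finset.range m, δ k) * ‖z 0‖ := by
    simpa using norm_le_prod_mul_norm_zero (x := fun m => z (halvingTime T m)) hδ fun m => by
      rw [hjump m, halvingTime_midpoint_sub, halvingTime_succ_sub_midpoint]
      exact hstep m _
  have hlocal : ∀ m, (1 + κ m) * ‖z (halvingTime T m)‖ ≤
      C * Real.exp (-((2 : ℝ) ^ (m + 1)) ^ γ) * ‖z 0‖ := fun m =>
    calc _ ≤ (1 + κ m) * ((∏ k ∈ Finset.range m, δ k) * ‖z 0‖) :=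
          mul_le_mul_of_nonneg_left (hnode m) (by linarith [hκ m])
      _ = ((1 + κ m) * ∏ k ∈ Finset.range m, δ k) * ‖z 0‖ := by ring
      _ ≤ _ := mul_le_mul_of_nonneg_right (hbudget m) (norm_nonneg _)
  have hC : 0 ≤ C := by
    have h0 := hbudget 0
    rw [Finset.prod_range_zero, mul_one] at h0
    exact (mul_nonneg_iff_of_pos_right (Real.exp_pos _)).1 (by linarith [hκ 0])
  refine ⟨fun t ht => ?_, fun m => ?_⟩
  · obtain ⟨m, hm⟩ := exists_mem_Ico_halvingTime ht
    have hTt : 0 < T - t := sub_pos.2 ht.2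
    calc ‖z t‖ ≤ ‖z (halvingTime T m)‖ + ‖F m (z (halvingTime T m))‖ :=
          norm_le_of_mem_Ico_of_impulse hS hQ (hfree m) (himp m) hm
      _ ≤ (1 + κ m) * ‖z (halvingTime T m)‖ := by linarith [hF m (z (halvingTime T m))]
      _ ≤ C * Real.exp (-((2 : ℝ) ^ (m + 1)) ^ γ) * ‖z 0‖ := hlocal m
      _ ≤ C * Real.exp (-(T / (T - t)) ^ γ) * ‖z 0‖ := by
          gcongr
          exact div_sub_le_of_lt_halvingTime hT hm.2
  · calc ‖F m (z (halvingTime T m))‖ ≤ κ m * ‖z (halvingTime T m)‖ := hF m _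
      _ ≤ (1 + κ m) * ‖z (halvingTime T m)‖ := by nlinarith [norm_nonneg (z (halvingTime T m))]
      _ ≤ _ := hlocal m

end ImpulseTrajectory

theorem tendsto_mul_exp_neg_rpow_atTop {γ : ℝ} (hγ : 0 < γ) (C c : ℝ) :
    Tendsto (fun x : ℝ => C * Real.exp (-x ^ γ) * c) atTop (𝓝 0) := by
  simpa using
    ((Real.tendsto_exp_neg_atTop_nhds_zero.comp (tendsto_rpow_atTop hγ)).const_mul C).mul_const c

theorem tendsto_div_sub_nhdsLT {T : ℝ} (hT : 0 < T) :
    Tendsto (fun t => T / (T - t)) (𝓝[<] T) atTop := by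
  have h : Tendsto (fun t => T - t) (𝓝[<] T) (𝓝[>] 0) := by
    refine tendsto_nhdsWithin_iff.2 ⟨?_, ?_⟩
    · simpa using ((tendsto_const_nhds (x := T)).sub tendsto_id).mono_left
        (nhdsWithin_le_nhds (a := T) (s := Iio T))
    · filter_upwards [self_mem_nhdsWithin] with t ht using sub_pos.2 (mem_Iio.1 ht)
  simpa [div_eq_mul_inv] using (tendsto_inv_nhdsGT_zero.comp h).const_mul_atTop hT

theorem tendsto_nhdsLT_of_le_mul_exp {f : ℝ → ℝ} {T γ C c : ℝ} (hT : 0 < T) (hγ : 0 < γ)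
    (hf : ∀ t, 0 ≤ f t) (h : ∀ t ∈ Ico 0 T, f t ≤ C * Real.exp (-(T / (T - t)) ^ γ) * c) :
    Tendsto f (𝓝[<] T) (𝓝 0) :=
  squeeze_zero' (Eventually.of_forall hf) (eventually_of_mem (Ico_mem_nhdsLT hT) h)
    ((tendsto_mul_exp_neg_rpow_atTop hγ C c).comp (tendsto_div_sub_nhdsLT hT))

theorem tendsto_atTop_of_le_mul_exp {f : ℕ → ℝ} {γ C c : ℝ} (hγ : 0 < γ) (hf : ∀ m, 0 ≤ f m)
    (h : ∀ m, f m ≤ C * Real.exp (-((2 : ℝ) ^ (m + 1)) ^ γ) * c) :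
    Tendsto f atTop (𝓝 0) :=
  squeeze_zero hf h ((tendsto_mul_exp_neg_rpow_atTop hγ C c).comp
    ((tendsto_pow_atTop_atTop_of_one_lt one_lt_two).comp (tendsto_add_atTop_nat 1)))

section Budget

open Real

/-- `log` of the observability constant of (a) at time `τ` and precision `ε`. -/
def obsExponent (C3 σ γ τ ε : ℝ) : ℝ :=
  C3 * (1 + (1 / τ) ^ γ) + (C3 / τ * log (exp 1 + 1 / ε)) ^ σ

def impulseTolerance (γ a : ℝ) (m : ℕ) : ℝ := exp (-(2 * a * (2 ^ γ - 1) * ((2 : ℝ) ^ m) ^ γ))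

theorem impulseTolerance_pos (γ a : ℝ) (m : ℕ) : 0 < impulseTolerance γ a m := exp_pos _

theorem prod_sqrt_impulseTolerance (γ a : ℝ) (m : ℕ) :
    ∏ k ∈ Finset.range m, √(impulseTolerance γ a k) = exp (-(a * (((2 : ℝ) ^ m) ^ γ - 1))) := by
  have hpow : ∀ k : ℕ, ((2 : ℝ) ^ k) ^ γ = (2 ^ γ) ^ k := fun k =>
    (rpow_pow_comm zero_le_two γ k).symm
  simp_rw [impulseTolerance, ← exp_half, ← exp_sum, hpow]
  rw [← geom_sum_mul, Finset.sum_mul, Finset.mul_sum, ← Finset.sum_neg_distrib]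
  exact congrArg exp (Finset.sum_congr rfl fun k _ => by ring)

theorem log_exp_one_add_exp_le {y : ℝ} (hy : 0 ≤ y) : log (exp 1 + exp y) ≤ y + 2 := by
  rw [log_le_iff_le_exp (by positivity), exp_add, show (2 : ℝ) = 1 + 1 by norm_num, exp_add]
  have h1 : 1 ≤ exp y := one_le_exp hy
  have h2 : 2 ≤ exp 1 := by linarith [add_one_le_exp (1 : ℝ)]
  nlinarith [mul_le_mul h1 h2 zero_le_two (exp_pos y).le]

theorem rpow_mul_rpow_self {y σ γ : ℝ} (hy : 0 < y) (hσγ : σ * (1 + γ) = γ) :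
    (y * y ^ γ) ^ σ = y ^ γ := by
  rw [show y * y ^ γ = y ^ (1 + γ) by rw [rpow_add hy, rpow_one], ← rpow_mul hy.le, mul_comm,
    hσγ]

theorem obsExponent_nonneg {C3 σ γ τ ε : ℝ} (hC3 : 0 ≤ C3) (hτ : 0 < τ) (hε : 0 < ε) :
    0 ≤ obsExponent C3 σ γ τ ε := by
  have : 0 ≤ log (exp 1 + 1 / ε) :=
    log_nonneg (by linarith [one_le_exp zero_le_one, one_div_pos.2 hε])
  unfold obsExponent; positivity

theorem obsExponent_le {C3 σ γ T y w : ℝ} (hC3 : 0 ≤ C3) (hT : 0 < T) (hσ : 0 ≤ σ)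
    (hγ : 0 ≤ γ) (hσγ : σ * (1 + γ) = γ) (hy : 1 ≤ y) (hw : 0 ≤ w) :
    obsExponent C3 σ γ (T / (4 * y)) (exp (-(w * y ^ γ))) ≤
      C3 + (C3 * (4 / T) ^ γ + (4 * C3 / T * (w + 2)) ^ σ) * y ^ γ := by
  have hy0 : 0 < y := by linarith
  have hx : 1 ≤ y ^ γ := one_le_rpow hy hγ
  have hlog : log (exp 1 + 1 / exp (-(w * y ^ γ))) ≤ (w + 2) * y ^ γ := by
    rw [one_div, ← exp_neg, neg_neg]
    nlinarith [log_exp_one_add_exp_le (by positivity : 0 ≤ w * y ^ γ)]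
  have hpow : (C3 / (T / (4 * y)) * log (exp 1 + 1 / exp (-(w * y ^ γ)))) ^ σ ≤
      (4 * C3 / T * (w + 2)) ^ σ * y ^ γ := by
    calc _ ≤ (4 * C3 / T * (w + 2) * (y * y ^ γ)) ^ σ := by
          refine rpow_le_rpow (mul_nonneg (by positivity) (log_nonneg ?_)) ?_ hσ
          · linarith [one_le_exp zero_le_one, one_div_pos.2 (exp_pos (-(w * y ^ γ)))]
          · rw [div_div_eq_mul_div]
            calc C3 * (4 * y) / T * log (exp 1 + 1 / exp (-(w * y ^ γ))) ≤
                C3 * (4 * y) / T * ((w + 2) * y ^ γ) := by gcongr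
              _ = _ := by ring
      _ = _ := by rw [mul_rpow (by positivity) (by positivity), rpow_mul_rpow_self hy0 hσγ]
  have hinv : (1 / (T / (4 * y))) ^ γ = (4 / T) ^ γ * y ^ γ := by
    rw [one_div_div, mul_div_right_comm, mul_rpow (by positivity) hy0.le]
  unfold obsExponent
  rw [hinv]
  nlinarith

theorem eventually_add_rpow_le {σ : ℝ} (hσ0 : 0 ≤ σ) (hσ1 : σ < 1) (c : ℝ) {b d : ℝ}
    (hb : 0 ≤ b) (hd : 0 ≤ d) : ∀ᶠ a in atTop, c + (b * a + d) ^ σ ≤ a := by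
  have hsmall : ∀ᶠ a : ℝ in atTop, (b + 1) ^ σ * a ^ (σ - 1) ≤ 1 / 2 := by
    have : Tendsto (fun a : ℝ => (b + 1) ^ σ * a ^ (σ - 1)) atTop (𝓝 0) := by
      simpa using (tendsto_rpow_neg_atTop (by linarith : 0 < 1 - σ)).const_mul ((b + 1) ^ σ)
    exact this.eventually (ge_mem_nhds (by norm_num))
  filter_upwards [hsmall, eventually_ge_atTop (2 * c), eventually_ge_atTop (max 1 d)]
    with a hsmall hc had
  have ha : 0 < a := lt_of_lt_of_le one_pos (le_of_max_le_left had)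
  calc c + (b * a + d) ^ σ ≤ c + ((b + 1) * a) ^ σ := by
        gcongr; linarith [le_of_max_le_right had]
    _ = c + (b + 1) ^ σ * a ^ (σ - 1) * a := by
        rw [mul_rpow (by positivity) ha.le, mul_assoc, ← rpow_add_one ha.ne', sub_add_cancel]
    _ ≤ a := by nlinarith

theorem exists_impulse_budget {C3 σ γ T : ℝ} (hC3 : 0 ≤ C3) (hT : 0 < T) (hσ0 : 0 ≤ σ)
    (hσ1 : σ < 1) (hγ : 0 < γ) (hσγ : σ * (1 + γ) = γ) :
    ∃ a C : ℝ, 0 < C ∧ ∀ m : ℕ,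
      (1 + √(exp (obsExponent C3 σ γ (T / 2 ^ (m + 2)) (impulseTolerance γ a m)))) *
        ∏ k ∈ Finset.range m, √(impulseTolerance γ a k) ≤ C * exp (-((2 : ℝ) ^ (m + 1)) ^ γ) := by
  set q : ℝ := 2 ^ γ
  have hq : 1 < q := one_lt_rpow one_lt_two hγ
  -- `a` must beat the observability cost, in which it only enters through `(… * a + …) ^ σ`
  obtain ⟨a, ha, ha0⟩ := (eventually_add_rpow_le hσ0 hσ1 (C3 * (4 / T) ^ γ + 2 * q)
    (b := 8 * C3 * (q - 1) / T) (d := 8 * C3 / T) (by positivity) (by positivity)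
    |>.and (eventually_ge_atTop 0)).exists
  refine ⟨a, 2 * exp (C3 / 2 + a), by positivity, fun m => ?_⟩
  have htarget : ((2 : ℝ) ^ (m + 1)) ^ γ = q * ((2 : ℝ) ^ m) ^ γ := by
    rw [pow_succ, mul_rpow (by positivity) zero_le_two, mul_comm]
  rw [prod_sqrt_impulseTolerance, ← exp_half, htarget]
  set x : ℝ := ((2 : ℝ) ^ m) ^ γ
  have hx : 1 ≤ x := one_le_rpow (one_le_pow₀ one_le_two) hγ.le
  set ℓ := obsExponent C3 σ γ (T / 2 ^ (m + 2)) (impulseTolerance γ a m)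
  have hℓ : 0 ≤ ℓ := obsExponent_nonneg hC3 (by positivity) (exp_pos _)
  have hcost : ℓ ≤ C3 + (C3 * (4 / T) ^ γ + (8 * C3 * (q - 1) / T * a + 8 * C3 / T) ^ σ) * x := by
    have := obsExponent_le hC3 hT hσ0 hγ.le hσγ (one_le_pow₀ one_le_two : (1 : ℝ) ≤ 2 ^ m)
      (by positivity : 0 ≤ 2 * a * (q - 1))
    rwa [show (4 : ℝ) * 2 ^ m = 2 ^ (m + 2) by ring,
      show 4 * C3 / T * (2 * a * (q - 1) + 2) = 8 * C3 * (q - 1) / T * a + 8 * C3 / T by ring]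
      at this
  calc (1 + exp (ℓ / 2)) * exp (-(a * (x - 1))) ≤ 2 * exp (ℓ / 2) * exp (-(a * (x - 1))) := by
        gcongr
        linarith [one_le_exp (by positivity : 0 ≤ ℓ / 2)]
    _ = 2 * exp (ℓ / 2 - a * (x - 1)) := by rw [mul_assoc, ← exp_add]; ring_nf
    _ ≤ 2 * exp (C3 / 2 + a - q * x) := by
        refine mul_le_mul_of_nonneg_left (exp_le_exp.2 ?_) zero_le_two
        nlinarith [mul_le_mul_of_nonneg_right ha (by linarith : (0 : ℝ) ≤ x)]
    _ = 2 * exp (C3 / 2 + a) * exp (-(q * x)) := by rw [mul_assoc, ← exp_add]; ring_nf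

end Budget

theorem finite_time_stabilization_general
    (d : ℕ) (Ω ω : Set (EuclideanSpace ℝ (Fin d)))
    (hωm : MeasurableSet ω)
    (B : HilbertBasis ℕ ℝ (Lp ℝ 2 (volume.restrict Ω)))
    (lam : ℕ → ℝ) (hpos : ∀ j, 0 < lam j)
    (σ C3 : ℝ) (hσ : σ ∈ Ioo (0:ℝ) 1) (hC3 : 0 < C3)
    -- (a) the observation estimate (iii)
    (hiii : ∀ ε > 0, ∀ t > 0, ∀ u0 : Lp ℝ 2 (volume.restrict Ω),
      ‖heatSG B lam t u0‖ ^ 2 ≤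
        Real.exp (C3 * (1 + (1 / t) ^ (σ / (1 - σ)))) *
          Real.exp ((C3 / t * Real.log (Real.exp 1 + 1 / ε)) ^ σ) *
            ‖indLp ω hωm (heatSG B lam t u0)‖ ^ 2
        + ε * ‖u0‖ ^ 2) :
    ∀ T > 0,
      ∃ (t_ : ℕ → ℝ) (F : ℕ → Lp ℝ 2 (volume.restrict Ω) →L[ℝ] Lp ℝ 2 (volume.restrict Ω))
        (C K : ℝ), 0 < C ∧ 0 < K ∧
        StrictMono t_ ∧ t_ 0 = 0 ∧ Tendsto t_ atTop (nhds T) ∧ (∀ m, t_ m < T) ∧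
        ∀ z0 : Lp ℝ 2 (volume.restrict Ω), ∀ z : ℝ → Lp ℝ 2 (volume.restrict Ω),
          z 0 = z0 →
          -- free evolution on [t_m, s_m), with s_m = (t_m + t_{m+1})/2
          (∀ m : ℕ, ∀ t ∈ Ico (t_ m) ((t_ m + t_ (m+1)) / 2),
            z t = heatSG B lam (t - t_ m) (z (t_ m))) →
          -- impulse at s_m, then free evolution on [s_m, t_{m+1})
          (∀ m : ℕ, ∀ t ∈ Ico ((t_ m + t_ (m+1)) / 2) (t_ (m+1)),
            z t = heatSG B lam (t - (t_ m + t_ (m+1)) / 2)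
              (heatSG B lam ((t_ m + t_ (m+1)) / 2 - t_ m) (z (t_ m))
                + indLp ω hωm (F m (z (t_ m))))) →
          -- left-continuity at t_{m+1}
          (∀ m : ℕ,
            z (t_ (m+1)) = heatSG B lam (t_ (m+1) - (t_ m + t_ (m+1)) / 2)
              (heatSG B lam ((t_ m + t_ (m+1)) / 2 - t_ m) (z (t_ m))
                + indLp ω hωm (F m (z (t_ m))))) →
          (∀ t ∈ Ico (0:ℝ) T,
            ‖z t‖ ≤ C * Real.exp (-(1 / K) * (T / (T - t)) ^ (σ / (1 - σ))) * ‖z0‖) ∧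
          Tendsto (fun t => ‖z t‖) (nhdsWithin T (Iio T)) (nhds 0) ∧
          Tendsto (fun m => ‖F m (z (t_ m))‖) atTop (nhds 0) := by
  intro T hT
  obtain ⟨hσ0, hσ1⟩ := hσ
  have hγ : 0 < σ / (1 - σ) := div_pos hσ0 (sub_pos.2 hσ1)
  have hσγ : σ * (1 + σ / (1 - σ)) = σ / (1 - σ) := by field_simp [(sub_pos.2 hσ1).ne']; ring
  have hlam : ∀ j, 0 ≤ lam j := fun j => (hpos j).le
  obtain ⟨a, C, hC, hbudget⟩ := exists_impulse_budget hC3.le hT hσ0.le hσ1 hγ hσγ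
  choose F hF using fun m : ℕ => exists_heat_feedback B hlam hωm (t := T / 2 ^ (m + 2))
    (M := Real.exp (obsExponent C3 σ (σ / (1 - σ)) (T / 2 ^ (m + 2))
      (impulseTolerance (σ / (1 - σ)) a m)))
    (by positivity) (Real.exp_pos _) (impulseTolerance_pos _ a m) fun u => by
      simpa only [obsExponent, Real.exp_add] using
        hiii _ (impulseTolerance_pos _ a m) (T / 2 ^ (m + 2)) (by positivity) u
  refine ⟨halvingTime T, F, C, 1, hC, one_pos, strictMono_halvingTime hT, halvingTime_zero T,
    tendsto_halvingTime T, halvingTime_lt hT, ?_⟩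
  rintro z0 z rfl hfree himp hjump
  obtain ⟨hz, hFz⟩ := norm_impulse_trajectory_le (F := fun m => F m) hT hγ.le
    (fun t ht => norm_heatSG_le B hlam ht) (Lp.norm_toLp_indicator_le hωm)
    (fun m => Real.sqrt_nonneg _) (fun m => Real.sqrt_nonneg _) (fun m x => (hF m x).1)
    (fun m x => (hF m x).2) hbudget hfree himp hjump
  exact ⟨fun t ht => by simpa using hz t ht,
    tendsto_nhdsLT_of_le_mul_exp hT hγ (fun t => norm_nonneg _) hz,
    tendsto_atTop_of_le_mul_exp hγ (fun m => norm_nonneg _) hFz⟩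

/-- Theorem 3.5, finite time stabilization by impulse controls. -/
theorem finite_time_stabilization
    (d : ℕ) (hd : 1 ≤ d) (Ω ω : Set (EuclideanSpace ℝ (Fin d)))
    (hΩo : IsOpen Ω) (hΩb : Bornology.IsBounded Ω) (hΩc : IsConnected Ω)
    (hωo : IsOpen ω) (hωne : ω.Nonempty) (hωΩ : ω ⊆ Ω) (hωm : MeasurableSet ω)
    (B : HilbertBasis ℕ ℝ (Lp ℝ 2 (volume.restrict Ω)))
    (lam : ℕ → ℝ) (hpos : ∀ j, 0 < lam j) (hmono : Monotone lam)
    (hlim : Tendsto lam atTop atTop)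
    (hfin : ∀ Λ : ℝ, {j : ℕ | lam j ≤ Λ}.Finite)
    (σ C3 : ℝ) (hσ : σ ∈ Ioo (0:ℝ) 1) (hC3 : 0 < C3)
    -- (a) the observation estimate (iii)
    (hiii : ∀ ε > 0, ∀ t > 0, ∀ u0 : Lp ℝ 2 (volume.restrict Ω),
      ‖heatSG B lam t u0‖ ^ 2 ≤
        Real.exp (C3 * (1 + (1 / t) ^ (σ / (1 - σ)))) *
          Real.exp ((C3 / t * Real.log (Real.exp 1 + 1 / ε)) ^ σ) *
            ‖indLp ω hωm (heatSG B lam t u0)‖ ^ 2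
        + ε * ‖u0‖ ^ 2)
    -- (b) the counting estimate for the eigenvalues
    (c ρ : ℝ) (hc : 0 < c) (hρ : 0 < ρ)
    (hcount : ∀ Λ > 0, ((hfin Λ).toFinset.card : ℝ) ≤ c * Λ ^ (1 / ρ)) :
    ∀ T > 0,
      ∃ (t_ : ℕ → ℝ) (F : ℕ → Lp ℝ 2 (volume.restrict Ω) →L[ℝ] Lp ℝ 2 (volume.restrict Ω))
        (C K : ℝ), 0 < C ∧ 0 < K ∧
        StrictMono t_ ∧ t_ 0 = 0 ∧ Tendsto t_ atTop (nhds T) ∧ (∀ m, t_ m < T) ∧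
        ∀ z0 : Lp ℝ 2 (volume.restrict Ω), ∀ z : ℝ → Lp ℝ 2 (volume.restrict Ω),
          z 0 = z0 →
          -- free evolution on [t_m, s_m), with s_m = (t_m + t_{m+1})/2
          (∀ m : ℕ, ∀ t ∈ Ico (t_ m) ((t_ m + t_ (m+1)) / 2),
            z t = heatSG B lam (t - t_ m) (z (t_ m))) →
          -- impulse at s_m, then free evolution on [s_m, t_{m+1})
          (∀ m : ℕ, ∀ t ∈ Ico ((t_ m + t_ (m+1)) / 2) (t_ (m+1)),
            z t = heatSG B lam (t - (t_ m + t_ (m+1)) / 2)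
              (heatSG B lam ((t_ m + t_ (m+1)) / 2 - t_ m) (z (t_ m))
                + indLp ω hωm (F m (z (t_ m))))) →
          -- left-continuity at t_{m+1}
          (∀ m : ℕ,
            z (t_ (m+1)) = heatSG B lam (t_ (m+1) - (t_ m + t_ (m+1)) / 2)
              (heatSG B lam ((t_ m + t_ (m+1)) / 2 - t_ m) (z (t_ m))
                + indLp ω hωm (F m (z (t_ m))))) →
          (∀ t ∈ Ico (0:ℝ) T,
            ‖z t‖ ≤ C * Real.exp (-(1 / K) * (T / (T - t)) ^ (σ / (1 - σ))) * ‖z0‖) ∧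
          Tendsto (fun t => ‖z t‖) (nhdsWithin T (Iio T)) (nhds 0) ∧
          Tendsto (fun m => ‖F m (z (t_ m))‖) atTop (nhds 0) :=
  finite_time_stabilization_general d Ω ω hωm B lam hpos σ C3 hσ hC3 hiii
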